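/- Let λ > 1 be real, let μ_λ be the measure (1−|z|²)^{λ−2} dA(z) on the unit disc 𝔻, let H_λ be the closure in L²(μ_λ) of the span of the monomials z^k (k ∈ ℕ), and let P_λ : L²(μ_λ) → H_λ be the orthogonal projection. For bounded measurable ψ : 𝔻 → ℂ define the Toeplitz operator T_ψ : H_λ → H_λ by T_ψ f = P_λ(ψ f). If ψ and φ are both bounded, measurable and radial (ψ(e^{iθ}z) = ψ(z) a.e. for every θ, and likewise for φ), then T_ψ ∘ T_φ = T_φ ∘ T_ψ. -/

import Mathlib

open MeasureTheory
open Complex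

/-- The open unit disc `𝔻 = {z ∈ ℂ : |z| < 1}`. -/
def unitDisc : Set ℂ := {z | ‖z‖ < 1}

/-- The weighted measure `μ_λ = (1-|z|²)^{λ-2} dA(z)` on the unit disc. -/
noncomputable def discBergMeasure (lam : ℝ) : Measure ℂ :=
  (volume.restrict unitDisc).withDensity
    fun z => ENNReal.ofReal ((1 - ‖z‖ ^ 2) ^ (lam - 2))

/-- The weighted Bergman space `H_λ`: the closure in `L²(μ_λ)` of the span of the
monomials `z^k`, `k ∈ ℕ`. -/
noncomputable def discBergSpace (lam : ℝ) : Submodule ℂ (Lp ℂ 2 (discBergMeasure lam)) :=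
  (Submodule.span ℂ
    {f : Lp ℂ 2 (discBergMeasure lam) |
      ∃ k : ℕ, ⇑f =ᵐ[discBergMeasure lam] fun z => z ^ k}).topologicalClosure

/-! Rotations `z ↦ e^{iθ} z` preserve `μ_λ`, so for a radial symbol `χ` the integral of
`χ z^j z̄^k` picks up the factor `e^{i(j-k)θ}`; taking `θ = π/(j-k)` shows that it vanishes for
`j ≠ k`. Hence the monomials are pairwise orthogonal, and `χ̄ z^m` is orthogonal to every monomial
except `z^m`, so on `H_λ` each Toeplitz operator acts diagonally:
`⟪z^m, T_χ g⟫ = c_m(χ) ⟪z^m, g⟫`. Two diagonal operators commute, and an element of `H_λ` is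
determined by its inner products with the monomials. For `λ > 1` the measure `μ_λ` is finite,
since `∫₀¹ r (1 - r²)^{λ-2} dr < ∞`, so that the monomials do lie in `L²(μ_λ)`. -/

open ComplexConjugate
open scoped InnerProductSpace

section Hilbert

variable {𝕜 E ι : Type*} [RCLike 𝕜] [NormedAddCommGroup E] [InnerProductSpace 𝕜 E]


theorem eq_of_forall_inner_eq_of_mem_closure_span {e : ι → E} {v w : E}
    (hv : v ∈ (Submodule.span 𝕜 (Set.range e)).topologicalClosure)
    (hw : w ∈ (Submodule.span 𝕜 (Set.range e)).topologicalClosure)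
    (h : ∀ k, ⟪e k, v⟫_𝕜 = ⟪e k, w⟫_𝕜) : v = w := by
  have hvanish : Set.EqOn (innerSL 𝕜 (v - w)) (0 : E →L[𝕜] 𝕜) (Set.range e) := by
    rintro _ ⟨k, rfl⟩
    simp only [innerSL_apply_apply, inner_sub_left, zero_apply]
    rw [← inner_conj_symm v, ← inner_conj_symm w, h k, sub_self]
  have hself : ⟪v - w, v - w⟫_𝕜 = 0 :=
    ContinuousLinearMap.eqOn_closure_span hvanish (Submodule.sub_mem _ hv hw)
  exact sub_eq_zero.1 (inner_self_eq_zero.1 hself)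

theorem inner_eq_mul_inner_of_mem_closure_span {e : ι → E}
    (he : Pairwise fun k l => ⟪e k, e l⟫_𝕜 = 0) {v : E} {m : ι}
    (hv : ∀ k, k ≠ m → ⟪v, e k⟫_𝕜 = 0) {g : E}
    (hg : g ∈ (Submodule.span 𝕜 (Set.range e)).topologicalClosure) :
    ⟪v, g⟫_𝕜 = ⟪v, e m⟫_𝕜 / ⟪e m, e m⟫_𝕜 * ⟪e m, g⟫_𝕜 := by
  set c := ⟪v, e m⟫_𝕜 / ⟪e m, e m⟫_𝕜
  have hvanish : Set.EqOn (innerSL 𝕜 v) (c • innerSL 𝕜 (e m) : E →L[𝕜] 𝕜) (Set.range e) := by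
    rintro _ ⟨k, rfl⟩
    simp only [innerSL_apply_apply, smul_apply, smul_eq_mul]
    rcases eq_or_ne k m with rfl | hkm
    · exact (div_mul_cancel_of_imp fun h => by rw [inner_self_eq_zero.1 h, inner_zero_right]).symm
    · rw [hv k hkm, he hkm.symm, mul_zero]
  exact ContinuousLinearMap.eqOn_closure_span hvanish hg

end Hilbert


theorem MeasureTheory.MeasurePreserving.withDensity_of_comp_eq {α : Type*} [MeasurableSpace α]
    {ν : Measure α} {f : α → α} (hf : MeasurePreserving f ν ν) (he : MeasurableEmbedding f)
    {ρ : α → ENNReal} (hρ : ∀ x, ρ (f x) = ρ x) :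
    MeasurePreserving f (ν.withDensity ρ) (ν.withDensity ρ) := by
  refine ⟨hf.measurable, Measure.ext fun s hs => ?_⟩
  rw [Measure.map_apply hf.measurable hs, withDensity_apply _ (hf.measurable hs),
    withDensity_apply _ hs, ← hf.setLIntegral_comp_preimage_emb he ρ s]
  simp only [hρ]

theorem measurableSet_unitDisc : MeasurableSet unitDisc :=
  (isOpen_lt continuous_norm continuous_const).measurableSet

theorem ae_mem_unitDisc_discBergMeasure (lam : ℝ) : ∀ᵐ z ∂discBergMeasure lam, z ∈ unitDisc :=
  (withDensity_absolutelyContinuous _ _).ae_le (ae_restrict_mem measurableSet_unitDisc)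

theorem measurePreserving_discBergMeasure_mul_left (lam : ℝ) (a : Circle) :
    MeasurePreserving (fun z => (a : ℂ) * z) (discBergMeasure lam) (discBergMeasure lam) := by
  have hvol : MeasurePreserving (fun z => (a : ℂ) * z) :=
    funext (rotation_apply a) ▸ (rotation a).measurePreserving
  have hdisc : (fun z => (a : ℂ) * z) ⁻¹' unitDisc = unitDisc := by
    ext z; simp [unitDisc, Circle.norm_coe]
  have hrestrict := hvol.restrict_preimage measurableSet_unitDisc
  rw [hdisc] at hrestrict
  exact hrestrict.withDensity_of_comp_eq (measurableEmbedding_mulLeft₀ a.coe_ne_zero)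
    fun z => by simp [Circle.norm_coe]

theorem Circle.exp_pow_mul_conj_pow_eq_neg_one {j k : ℕ} (hjk : j ≠ k) :
    (Circle.exp (Real.pi / (j - k)) : ℂ) ^ j * conj (Circle.exp (Real.pi / (j - k)) : ℂ) ^ k
      = -1 := by
  have hjk' : (j : ℂ) - k ≠ 0 := sub_ne_zero.2 (by exact_mod_cast hjk)
  rw [Circle.coe_exp, ← Complex.exp_conj, ← Complex.exp_nat_mul, ← Complex.exp_nat_mul,
    ← Complex.exp_add, ← Complex.exp_pi_mul_I]
  congr 1
  simp only [map_mul, Complex.conj_ofReal, Complex.conj_I]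
  push_cast
  field_simp
  ring

theorem integral_mul_pow_mul_conj_pow_eq_zero {μ : Measure ℂ}
    (hμ : ∀ a : Circle, MeasurePreserving (fun z => (a : ℂ) * z) μ μ) {χ : ℂ → ℂ}
    (hχ : ∀ θ : ℝ, ∀ᵐ z ∂μ, χ (exp (θ * I) * z) = χ z) {j k : ℕ} (hjk : j ≠ k) :
    ∫ z, χ z * (z ^ j * conj z ^ k) ∂μ = 0 := by
  set a := Circle.exp (Real.pi / (j - k))
  set I₀ := ∫ z, χ z * (z ^ j * conj z ^ k) ∂μ
  have hrot : ∫ z, χ (a * z) * ((a * z) ^ j * conj (a * z) ^ k) ∂μ = I₀ :=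
    (hμ a).integral_comp (measurableEmbedding_mulLeft₀ a.coe_ne_zero)
      fun z => χ z * (z ^ j * conj z ^ k)
  have hradial : ∫ z, χ (a * z) * ((a * z) ^ j * conj (a * z) ^ k) ∂μ
      = ((a : ℂ) ^ j * conj (a : ℂ) ^ k) * I₀ := by
    rw [← integral_const_mul]
    refine integral_congr_ae ?_
    filter_upwards [hχ (Real.pi / (j - k))] with z hz
    rw [← Circle.coe_exp] at hz
    rw [hz, map_mul]
    ring
  rw [Circle.exp_pow_mul_conj_pow_eq_neg_one hjk, hrot] at hradial
  linear_combination hradial / 2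

open Set in
theorem integrableOn_mul_one_sub_sq_rpow {s : ℝ} (hs : -1 < s) :
    IntegrableOn (fun y : ℝ => y * (1 - y ^ 2) ^ s) (Ioo 0 1) := by
  have hs1 : s + 1 ≠ 0 := by linarith
  let F : ℝ → ℝ := fun y => -(1 - y ^ 2) ^ (s + 1) / (2 * (s + 1))
  have hcont : ContinuousOn F (Icc 0 1) :=
    ((ContinuousOn.rpow_const (by fun_prop) fun _ _ => Or.inr (by linarith)).neg).div_const _
  have hderiv : ∀ y ∈ Ioo (0 : ℝ) 1, HasDerivAt F (y * (1 - y ^ 2) ^ s) y := by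
    intro y hy
    have hpos : 0 < 1 - y ^ 2 := by nlinarith [hy.1, hy.2]
    refine ((((hasDerivAt_pow 2 y).const_sub 1).rpow_const (p := s + 1)
      (Or.inl hpos.ne')).neg.div_const (2 * (s + 1))).congr_deriv ?_
    rw [add_sub_cancel_right]
    field_simp
    ring
  exact (intervalIntegral.integrableOn_deriv_of_nonneg hcont hderiv fun y hy =>
    mul_nonneg hy.1.le (Real.rpow_nonneg (by nlinarith [hy.1, hy.2]) _)).mono_set Ioo_subset_Ioc_self

theorem integrableOn_unitDisc_one_sub_norm_sq_rpow {s : ℝ} (hs : -1 < s) :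
    IntegrableOn (fun z : ℂ => (1 - ‖z‖ ^ 2) ^ s) unitDisc := by
  have hball : unitDisc = Metric.ball 0 1 := by ext z; simp [unitDisc]
  rw [hball, integrableOn_fun_norm_addHaar volume (f := fun r => (1 - r ^ 2) ^ s)]
  simpa [Complex.finrank_real_complex] using integrableOn_mul_one_sub_sq_rpow hs

theorem isFiniteMeasure_discBergMeasure {lam : ℝ} (hlam : 1 < lam) :
    IsFiniteMeasure (discBergMeasure lam) := by
  refine ⟨?_⟩
  rw [discBergMeasure, withDensity_apply _ MeasurableSet.univ, Measure.restrict_univ]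
  exact (integrableOn_unitDisc_one_sub_norm_sq_rpow (by linarith)).lintegral_lt_top


theorem MeasureTheory.L2.inner_eq_integral_of_ae_eq {α : Type*} [MeasurableSpace α]
    {μ : Measure α} {x y : Lp ℂ 2 μ} {X Y : α → ℂ} (hx : ⇑x =ᵐ[μ] X) (hy : ⇑y =ᵐ[μ] Y) :
    ⟪x, y⟫_ℂ = ∫ a, conj (X a) * Y a ∂μ := by
  rw [L2.inner_def]
  refine integral_congr_ae ?_
  filter_upwards [hx, hy] with a hxa hya
  rw [RCLike.inner_apply, hxa, hya, mul_comm]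

section Bergman

variable {lam : ℝ} [IsFiniteMeasure (discBergMeasure lam)]

theorem memLp_discBergMeasure_of_norm_le {F : ℂ → ℂ} (hF : Measurable F) {C : ℝ}
    (hC : ∀ z ∈ unitDisc, ‖F z‖ ≤ C) {p : ENNReal} : MemLp F p (discBergMeasure lam) :=
  MemLp.of_bound hF.aestronglyMeasurable C <|
    (ae_mem_unitDisc_discBergMeasure lam).mono hC

variable (lam) in
noncomputable def discMonomial (m : ℕ) : Lp ℂ 2 (discBergMeasure lam) :=
  (memLp_discBergMeasure_of_norm_le (measurable_id.pow_const m) (C := 1) fun z hz =>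
    by simpa using pow_le_one₀ (norm_nonneg z) (le_of_lt hz)).toLp (· ^ m)

theorem coeFn_discMonomial (m : ℕ) :
    ⇑(discMonomial lam m) =ᵐ[discBergMeasure lam] fun z => z ^ m :=
  MemLp.coeFn_toLp _

variable (lam) in
theorem discBergSpace_eq_closure_span_discMonomial :
    discBergSpace lam = (Submodule.span ℂ (Set.range (discMonomial lam))).topologicalClosure := by
  have hmonomials : {f : Lp ℂ 2 (discBergMeasure lam) |
      ∃ k : ℕ, ⇑f =ᵐ[discBergMeasure lam] fun z => z ^ k} = Set.range (discMonomial lam) := by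
    ext f
    exact ⟨fun ⟨m, hm⟩ => ⟨m, Lp.ext ((coeFn_discMonomial m).trans hm.symm)⟩,
      fun ⟨m, hm⟩ => ⟨m, hm ▸ coeFn_discMonomial m⟩⟩
  rw [discBergSpace, hmonomials]

theorem discMonomial_mem_discBergSpace (m : ℕ) : discMonomial lam m ∈ discBergSpace lam :=
  Submodule.le_topologicalClosure _ (Submodule.subset_span ⟨m, coeFn_discMonomial m⟩)

theorem inner_discMonomial_discMonomial_of_ne {k m : ℕ} (hkm : k ≠ m) :
    ⟪discMonomial lam k, discMonomial lam m⟫_ℂ = 0 := by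
  rw [L2.inner_eq_integral_of_ae_eq (coeFn_discMonomial k) (coeFn_discMonomial m)]
  simpa [mul_comm] using integral_mul_pow_mul_conj_pow_eq_zero
    (measurePreserving_discBergMeasure_mul_left lam) (χ := fun _ => 1)
    (fun _ => .of_forall fun _ => rfl) hkm.symm

variable (lam) in
theorem exists_inner_discMonomial_eq_mul_of_radial {χ : ℂ → ℂ} (hmeas : Measurable χ)
    (hbd : ∃ C : ℝ, ∀ z, ‖χ z‖ ≤ C)
    (hrad : ∀ θ : ℝ, ∀ᵐ z ∂(volume.restrict unitDisc), χ (exp (θ * I) * z) = χ z) (m : ℕ) :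
    ∃ c : ℂ, ∀ g ∈ discBergSpace lam, ∀ x : Lp ℂ 2 (discBergMeasure lam),
      (⇑x =ᵐ[discBergMeasure lam] fun z => χ z * g z) →
      ⟪discMonomial lam m, x⟫_ℂ = c * ⟪discMonomial lam m, g⟫_ℂ := by
  obtain ⟨C, hC⟩ := hbd
  have hmem : MemLp (fun z => conj (χ z) * z ^ m) 2 (discBergMeasure lam) :=
    memLp_discBergMeasure_of_norm_le (by fun_prop) fun z hz => by
      simpa using mul_le_mul (hC z) (pow_le_one₀ (norm_nonneg z) (le_of_lt hz))
        (by positivity) ((norm_nonneg _).trans (hC z))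
  set h := hmem.toLp
  have hradμ : ∀ θ : ℝ, ∀ᵐ z ∂discBergMeasure lam, χ (exp (θ * I) * z) = χ z :=
    fun θ => (withDensity_absolutelyContinuous _ _).ae_le (hrad θ)
  have horth : ∀ k, k ≠ m → ⟪h, discMonomial lam k⟫_ℂ = 0 := fun k hkm => by
    rw [L2.inner_eq_integral_of_ae_eq hmem.coeFn_toLp (coeFn_discMonomial k)]
    simpa [mul_comm, mul_left_comm] using integral_mul_pow_mul_conj_pow_eq_zero
      (measurePreserving_discBergMeasure_mul_left lam) hradμ hkm
  refine ⟨⟪h, discMonomial lam m⟫_ℂ / ⟪discMonomial lam m, discMonomial lam m⟫_ℂ,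
    fun g hg x hx => ?_⟩
  rw [discBergSpace_eq_closure_span_discMonomial lam] at hg
  rw [← inner_eq_mul_inner_of_mem_closure_span
    (fun k l hkl => inner_discMonomial_discMonomial_of_ne hkl) horth hg,
    L2.inner_eq_integral_of_ae_eq (coeFn_discMonomial m) hx,
    L2.inner_eq_integral_of_ae_eq hmem.coeFn_toLp (Filter.EventuallyEq.refl _ _)]
  refine integral_congr_ae (.of_forall fun z => ?_)
  simp only [map_mul, map_pow, Complex.conj_conj]
  ring

end Bergman

theorem disc_radial_Toeplitz_commute_general (lam : ℝ) (hlam : 1 < lam)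
    (P : Lp ℂ 2 (discBergMeasure lam) →L[ℂ] Lp ℂ 2 (discBergMeasure lam))
    (hPmem : ∀ f, P f ∈ discBergSpace lam)
    (hPorth : ∀ f : Lp ℂ 2 (discBergMeasure lam), ∀ g ∈ discBergSpace lam,
      (inner ℂ (f - P f) g : ℂ) = 0)
    (ψ φ : ℂ → ℂ) (hψmeas : Measurable ψ) (hφmeas : Measurable φ)
    (hψbd : ∃ C : ℝ, ∀ z, ‖ψ z‖ ≤ C) (hφbd : ∃ C : ℝ, ∀ z, ‖φ z‖ ≤ C)
    (hψrad : ∀ θ : ℝ, ∀ᵐ z ∂(volume.restrict unitDisc),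
      ψ (Complex.exp (θ * Complex.I) * z) = ψ z)
    (hφrad : ∀ θ : ℝ, ∀ᵐ z ∂(volume.restrict unitDisc),
      φ (Complex.exp (θ * Complex.I) * z) = φ z) :
    ∀ f : Lp ℂ 2 (discBergMeasure lam), f ∈ discBergSpace lam →
      ∀ a b c d : Lp ℂ 2 (discBergMeasure lam),
        (⇑a =ᵐ[discBergMeasure lam] fun z => φ z * f z) →
        (⇑b =ᵐ[discBergMeasure lam] fun z => ψ z * (P a) z) →
        (⇑c =ᵐ[discBergMeasure lam] fun z => ψ z * f z) →
        (⇑d =ᵐ[discBergMeasure lam] fun z => φ z * (P c) z) →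
        P b = P d := by
  intro f hf a b c d ha hb hc hd
  have := isFiniteMeasure_discBergMeasure hlam
  have hP : ∀ x m, ⟪discMonomial lam m, P x⟫_ℂ = ⟪discMonomial lam m, x⟫_ℂ := fun x m => by
    have h := hPorth x _ (discMonomial_mem_discBergSpace m)
    rw [← inner_conj_symm, inner_sub_right, map_eq_zero, sub_eq_zero] at h
    exact h.symm
  have hPmem_span := fun x => (discBergSpace_eq_closure_span_discMonomial lam).le (hPmem x)
  refine eq_of_forall_inner_eq_of_mem_closure_span (hPmem_span b) (hPmem_span d) fun m => ?_
  obtain ⟨cψ, hcψ⟩ := exists_inner_discMonomial_eq_mul_of_radial lam hψmeas hψbd hψrad m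
  obtain ⟨cφ, hcφ⟩ := exists_inner_discMonomial_eq_mul_of_radial lam hφmeas hφbd hφrad m
  rw [hP, hcψ _ (hPmem a) _ hb, hP, hcφ _ hf _ ha, hP, hcφ _ (hPmem c) _ hd, hP, hcψ _ hf _ hc]
  ring

/-- **Toeplitz operators with radial symbols on the disc commute.**
Let `λ > 1`, let `P` be the orthogonal projection of `L²(μ_λ)` onto `H_λ`, and let
`ψ, φ` be bounded measurable radial symbols. Then `T_ψ ∘ T_φ = T_φ ∘ T_ψ`, i.e.
`P(ψ · P(φ f)) = P(φ · P(ψ f))` for every `f ∈ H_λ`. -/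
theorem disc_radial_Toeplitz_commute (lam : ℝ) (hlam : 1 < lam)
    (P : Lp ℂ 2 (discBergMeasure lam) →L[ℂ] Lp ℂ 2 (discBergMeasure lam))
    (hPmem : ∀ f, P f ∈ discBergSpace lam)
    (hPid : ∀ f ∈ discBergSpace lam, P f = f)
    (hPorth : ∀ f : Lp ℂ 2 (discBergMeasure lam), ∀ g ∈ discBergSpace lam,
      (inner ℂ (f - P f) g : ℂ) = 0)
    (ψ φ : ℂ → ℂ) (hψmeas : Measurable ψ) (hφmeas : Measurable φ)
    (hψbd : ∃ C : ℝ, ∀ z, ‖ψ z‖ ≤ C) (hφbd : ∃ C : ℝ, ∀ z, ‖φ z‖ ≤ C)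
    (hψrad : ∀ θ : ℝ, ∀ᵐ z ∂(volume.restrict unitDisc),
      ψ (Complex.exp (θ * Complex.I) * z) = ψ z)
    (hφrad : ∀ θ : ℝ, ∀ᵐ z ∂(volume.restrict unitDisc),
      φ (Complex.exp (θ * Complex.I) * z) = φ z) :
    ∀ f : Lp ℂ 2 (discBergMeasure lam), f ∈ discBergSpace lam →
      ∀ a b c d : Lp ℂ 2 (discBergMeasure lam),
        (⇑a =ᵐ[discBergMeasure lam] fun z => φ z * f z) →
        (⇑b =ᵐ[discBergMeasure lam] fun z => ψ z * (P a) z) →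
        (⇑c =ᵐ[discBergMeasure lam] fun z => ψ z * f z) →
        (⇑d =ᵐ[discBergMeasure lam] fun z => φ z * (P c) z) →
        P b = P d :=
  disc_radial_Toeplitz_commute_general lam hlam P hPmem hPorth ψ φ hψmeas hφmeas hψbd hφbd hψrad
    hφrad
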